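/- Let N ≥ 1 be an integer and define g : [0,1] → ℝ by g(p) = |2p−1|·log N − p log p − (1−p) log(1−p) (with 0 log 0 = 0). Then g(p) ≤ log((N²+1)/N) for all p ∈ [0,1], with equality if and only if p = N²/(N²+1) or p = 1/(N²+1). -/

import Mathlib

/-!
For `p ≥ 1/2` the drift term is `(2p-1) log N`, and `g(p) = p log (N/p) + (1-p) log (N⁻¹/(1-p))`;
for `p ≤ 1/2` the roles of `N` and `N⁻¹` swap. Since `log N ≥ 0`, `g` is in fact the maximum of
the two expressions on all of `[0,1]`. By strict concavity of `log` (Jensen with weights `p, 1-p`),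
`p log (a/p) + (1-p) log (b/(1-p)) ≤ log (a+b)`, with equality exactly when `a/p = b/(1-p)`,
i.e. `p = a/(a+b)`. With `{a, b} = {N, N⁻¹}` the bound is `log (N + N⁻¹)` and the maximisers are
`N²/(N²+1)` and `1/(N²+1)`.
-/

namespace PaperStmt

/-- The entropy function of the Kalikow drift parameter. -/
noncomputable def kalikowG (N : ℕ) (p : ℝ) : ℝ :=
  |2 * p - 1| * Real.log N - p * Real.log p - (1 - p) * Real.log (1 - p)

open Real

section Jensen

variable {a b p : ℝ}

theorem mul_log_div_add_mul_log_div_lt_log_add (ha : 0 < a) (hb : 0 < b) (hp₀ : 0 ≤ p)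
    (hp₁ : p ≤ 1) (hne : p ≠ a / (a + b)) :
    p * log (a / p) + (1 - p) * log (b / (1 - p)) < log (a + b) := by
  rcases hp₀.eq_or_lt with rfl | hp₀
  · simpa using log_lt_log hb (lt_add_of_pos_left b ha)
  rcases hp₁.eq_or_lt with rfl | hp₁
  · simpa using log_lt_log ha (lt_add_of_pos_right a hb)
  have hq : 0 < 1 - p := sub_pos.mpr hp₁
  have hxy : a / p ≠ b / (1 - p) := by
    intro h
    rw [div_eq_div_iff hp₀.ne' hq.ne'] at h
    exact hne (by rw [eq_div_iff (by positivity)]; linarith)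
  have hmean : p * (a / p) + (1 - p) * (b / (1 - p)) = a + b := by field_simp
  simpa only [smul_eq_mul, hmean] using
    strictConcaveOn_log_Ioi.2 (Set.mem_Ioi.2 (div_pos ha hp₀)) (Set.mem_Ioi.2 (div_pos hb hq))
      hxy hp₀ hq (by ring)

theorem mul_log_div_add_mul_log_div_eq_log_add (ha : 0 < a) (hb : 0 < b) :
    a / (a + b) * log (a / (a / (a + b))) + (1 - a / (a + b)) * log (b / (1 - a / (a + b)))
      = log (a + b) := by
  have hs : a + b ≠ 0 := by positivity
  have h₁ : a / (a / (a + b)) = a + b := div_div_cancel₀ ha.ne'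
  have h₂ : b / (1 - a / (a + b)) = a + b := by
    rw [one_sub_div hs, add_sub_cancel_left, div_div_cancel₀ hb.ne']
  rw [h₁, h₂]
  ring

theorem mul_log_div_add_mul_log_div_le_log_add (ha : 0 < a) (hb : 0 < b) (hp₀ : 0 ≤ p)
    (hp₁ : p ≤ 1) :
    p * log (a / p) + (1 - p) * log (b / (1 - p)) ≤ log (a + b) := by
  rcases eq_or_ne p (a / (a + b)) with rfl | hne
  · exact (mul_log_div_add_mul_log_div_eq_log_add ha hb).le
  · exact (mul_log_div_add_mul_log_div_lt_log_add ha hb hp₀ hp₁ hne).le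

theorem mul_log_div_add_mul_log_div_eq_log_add_iff (ha : 0 < a) (hb : 0 < b) (hp₀ : 0 ≤ p)
    (hp₁ : p ≤ 1) :
    p * log (a / p) + (1 - p) * log (b / (1 - p)) = log (a + b) ↔ p = a / (a + b) := by
  refine ⟨fun h ↦ ?_, fun h ↦ h ▸ mul_log_div_add_mul_log_div_eq_log_add ha hb⟩
  by_contra hne
  exact (mul_log_div_add_mul_log_div_lt_log_add ha hb hp₀ hp₁ hne).ne h

end Jensen

theorem max_eq_iff_of_le {α : Type*} [LinearOrder α] {u v c : α} (hu : u ≤ c) (hv : v ≤ c) :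
    max u v = c ↔ u = c ∨ v = c := by
  rw [max_eq_iff]
  constructor
  · rintro (⟨h, -⟩ | ⟨h, -⟩) <;> simp [h]
  · rintro (rfl | rfl)
    exacts [Or.inl ⟨rfl, hv⟩, Or.inr ⟨rfl, hu⟩]

theorem mul_log_div_of_ne_zero {a : ℝ} (ha : a ≠ 0) (x : ℝ) :
    x * log (a / x) = x * log a - x * log x := by
  rcases eq_or_ne x 0 with rfl | hx
  · simp
  · rw [log_div ha hx, mul_sub]

theorem kalikowG_eq_max {N : ℕ} (hN : 1 ≤ N) (p : ℝ) :
    kalikowG N p = max (p * log (N / p) + (1 - p) * log ((N : ℝ)⁻¹ / (1 - p)))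
      (p * log ((N : ℝ)⁻¹ / p) + (1 - p) * log (N / (1 - p))) := by
  have hN₀ : (N : ℝ) ≠ 0 := by positivity
  simp only [mul_log_div_of_ne_zero hN₀, mul_log_div_of_ne_zero (inv_ne_zero hN₀), log_inv]
  rw [kalikowG, abs_eq_max_neg, max_mul_of_nonneg _ _ (log_natCast_nonneg N), ← max_sub_sub_right,
    ← max_sub_sub_right]
  congr 1 <;> ring

theorem kalikow_drift_maximization (N : ℕ) (hN : 1 ≤ N) (p : ℝ) (hp : p ∈ Set.Icc (0 : ℝ) 1) :
    kalikowG N p ≤ Real.log (((N : ℝ) ^ 2 + 1) / N) ∧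
    (kalikowG N p = Real.log (((N : ℝ) ^ 2 + 1) / N) ↔
      p = (N : ℝ) ^ 2 / ((N : ℝ) ^ 2 + 1) ∨ p = 1 / ((N : ℝ) ^ 2 + 1)) := by
  obtain ⟨hp₀, hp₁⟩ := hp
  have hN₀ : (0 : ℝ) < N := by exact_mod_cast hN
  have hN₀' : (0 : ℝ) < (N : ℝ)⁻¹ := inv_pos.mpr hN₀
  have hbound : ((N : ℝ) ^ 2 + 1) / N = N + (N : ℝ)⁻¹ := by field_simp
  have hbound' : ((N : ℝ) ^ 2 + 1) / N = (N : ℝ)⁻¹ + N := by rw [hbound, add_comm]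
  have hq : (N : ℝ) / (N + (N : ℝ)⁻¹) = N ^ 2 / (N ^ 2 + 1) := by field_simp
  have hq' : (N : ℝ)⁻¹ / ((N : ℝ)⁻¹ + N) = 1 / (N ^ 2 + 1) := by field_simp; ring
  have hle := mul_log_div_add_mul_log_div_le_log_add hN₀ hN₀' hp₀ hp₁
  have hle' := mul_log_div_add_mul_log_div_le_log_add hN₀' hN₀ hp₀ hp₁
  rw [kalikowG_eq_max hN]
  refine ⟨max_le (hbound ▸ hle) (hbound' ▸ hle'), ?_⟩
  rw [max_eq_iff_of_le (hbound ▸ hle) (hbound' ▸ hle'), ← hq, ← hq', hbound,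
    mul_log_div_add_mul_log_div_eq_log_add_iff hN₀ hN₀' hp₀ hp₁, ← hbound, hbound',
    mul_log_div_add_mul_log_div_eq_log_add_iff hN₀' hN₀ hp₀ hp₁]

end PaperStmt
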